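/- arXiv:2503.04578 — 3 statements merged into one kernel-verified Lean document; each statement's English description precedes it below -/
import Mathlib

section
/- Let $G$ be a group with a finite subset $S \subseteq G$ containing the identity $e$, let $\pi : G \to U(\mathcal{H})$ be a unitary representation, and suppose there exists $\varepsilon > 0$ such that for every $\xi$ orthogonal to the $G$-fixed vectors there exists $s_0 \in S$ with $\|\pi(s_0)\xi - \xi\| \ge \varepsilon\|\xi\|$. Then there exists $\delta > 0$, depending only on $\varepsilon$, such that for every $\xi$ orthogonal to the $G$-fixed vectors, $\left\| \sum_{s \in S} \pi(s)\xi \right\| \le (|S| - \delta)\|\xi\|$. -/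
open scoped InnerProductSpace

open Finset

/-! A vector `ξ` moved by a distance at least `ε‖ξ‖` by some `π(s₀)` pairs with
`π(1)ξ = ξ` to give, by the parallelogram law, `‖π(s₀)ξ + ξ‖ ≤ (2 - ε²/4)‖ξ‖`;
the remaining `|S| - 2` terms of the sum have norm `‖ξ‖` each. So `δ = ε²/4` works. -/

theorem norm_add_le_of_mul_le_norm_sub {𝕜 E : Type*} [RCLike 𝕜]
    [NormedAddCommGroup E] [InnerProductSpace 𝕜 E] {x y : E} {c r : ℝ} (hc : 0 ≤ c)
    (hx : ‖x‖ = r) (hy : ‖y‖ = r) (hxy : c * r ≤ ‖x - y‖) :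
    ‖x + y‖ ≤ (2 - c ^ 2 / 4) * r := by
  have hr : 0 ≤ r := hx ▸ norm_nonneg x
  have hsub : (c * r) ^ 2 ≤ ‖x - y‖ ^ 2 := pow_le_pow_left₀ (mul_nonneg hc hr) hxy 2
  have hadd : ‖x + y‖ ^ 2 ≤ (4 - c ^ 2) * r ^ 2 := by
    have hpar := parallelogram_law_with_norm 𝕜 x y
    rw [hx, hy] at hpar
    nlinarith
  rcases le_or_gt 0 ((2 - c ^ 2 / 4) * r) with hk | hk
  · refine le_of_sq_le_sq ?_ hk
    nlinarith [sq_nonneg (c ^ 2 * r)]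
  · -- then `c² > 8`, so `hadd` forces `r = 0`
    nlinarith [sq_nonneg ‖x + y‖]

theorem norm_sum_le_of_norm_add_le {ι E : Type*} [DecidableEq ι]
    [SeminormedAddCommGroup E] {S : Finset ι} {f : ι → E} {a b : ι} {r t : ℝ}
    (ha : a ∈ S) (hb : b ∈ S) (hab : a ≠ b) (hf : ∀ i ∈ S, ‖f i‖ ≤ r)
    (hpair : ‖f a + f b‖ ≤ t) :
    ‖∑ i ∈ S, f i‖ ≤ t + (#S - 2) * r := by
  have hb' : b ∈ S.erase a := mem_erase.mpr ⟨hab.symm, hb⟩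
  rw [← add_sum_erase _ _ ha, ← add_sum_erase _ _ hb', ← add_assoc]
  have hrest : ∑ i ∈ (S.erase a).erase b, ‖f i‖ ≤ (#S - 2) * r := by
    have hcard : (#((S.erase a).erase b) : ℝ) = #S - 2 := by
      rw [cast_card_erase_of_mem hb', cast_card_erase_of_mem ha]
      ring
    rw [← hcard, ← nsmul_eq_mul]
    exact sum_le_card_nsmul _ _ r fun i hi => hf i (mem_of_mem_erase (mem_of_mem_erase hi))
  calc ‖f a + f b + ∑ i ∈ (S.erase a).erase b, f i‖
      ≤ ‖f a + f b‖ + ∑ i ∈ (S.erase a).erase b, ‖f i‖ :=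
        (norm_add_le _ _).trans (by gcongr; exact norm_sum_le _ _)
    _ ≤ t + (#S - 2) * r := add_le_add hpair hrest

/-- if `S ∋ e` is a finite subset of `G`, `π` a unitary
representation of `G` and `ε > 0` is such that every vector `ξ` orthogonal to
the `G`-fixed vectors satisfies `‖π(s)ξ - ξ‖ ≥ ε‖ξ‖` for some `s ∈ S`, then
there is `δ > 0` depending only on `ε` with
`‖∑_{s∈S} π(s)ξ‖ ≤ (|S| - δ)‖ξ‖` for all such `ξ`. -/
theorem stmt2 (ε : ℝ) (hε : 0 < ε) :
    ∃ δ : ℝ, 0 < δ ∧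
      ∀ (H : Type) [NormedAddCommGroup H] [InnerProductSpace ℂ H] [CompleteSpace H]
        (G : Type) [Group G] (S : Finset G),
        (1 : G) ∈ S →
        ∀ (π : G →* (H ≃ₗᵢ[ℂ] H)),
        (∀ ξ : H, (∀ v : H, (∀ g : G, π g v = v) → ⟪ξ, v⟫_ℂ = 0) →
            ∃ s ∈ S, ε * ‖ξ‖ ≤ ‖π s ξ - ξ‖) →
        ∀ ξ : H, (∀ v : H, (∀ g : G, π g v = v) → ⟪ξ, v⟫_ℂ = 0) →
          ‖∑ s ∈ S, π s ξ‖ ≤ ((S.card : ℝ) - δ) * ‖ξ‖ := by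
  refine ⟨ε ^ 2 / 4, by positivity, ?_⟩
  intro H _ _ _ G _ S h1S π hgap ξ hξ
  classical
  obtain ⟨s, hs, hsξ⟩ := hgap ξ hξ
  have hnorm : ∀ g, ‖π g ξ‖ = ‖ξ‖ := fun g => (π g).norm_map ξ
  have hπ1 : π 1 ξ = ξ := by simp
  rcases eq_or_ne s 1 with rfl | hs1
  · have hξ0 : ξ = 0 := by
      rw [hπ1, sub_self, norm_zero] at hsξ
      exact norm_le_zero_iff.mp (nonpos_of_mul_nonpos_right hsξ hε)
    simp [hξ0]
  have hpair : ‖π s ξ + π 1 ξ‖ ≤ (2 - ε ^ 2 / 4) * ‖ξ‖ := by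
    rw [hπ1]
    exact norm_add_le_of_mul_le_norm_sub (𝕜 := ℂ) hε.le (hnorm s) rfl hsξ
  calc ‖∑ g ∈ S, π g ξ‖ ≤ (2 - ε ^ 2 / 4) * ‖ξ‖ + (S.card - 2) * ‖ξ‖ :=
        norm_sum_le_of_norm_add_le hs h1S hs1 (fun g _ => (hnorm g).le) hpair
    _ = (S.card - ε ^ 2 / 4) * ‖ξ‖ := by ring
end

section
/- Let $(\mathcal{H}_n)_{n \in \mathbb{N}}$ be a sequence of Hilbert spaces and $T_n \in B(\mathcal{H}_n)$ self-adjoint operators, and set $T = (T_n)_n \in B(\bigoplus_n \mathcal{H}_n)$ (assuming $\sup_n \|T_n\| < \infty$). Suppose $\delta \in \mathbb{R}$ is such that $T - \delta$ is invertible modulo the closure of the ideal $\bigoplus_n B(\mathcal{H}_n)$ (the operators with only finitely many nonzero components). Then there is a sequence $S_n \in B(\mathcal{H}_n)$ with $\sup_n \|S_n\| < \infty$ and $(T_n - \delta) S_n = 1_{\mathcal{H}_n}$ for all but finitely many $n$. -/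
/-!
Fix `S'` with `(T - δ) S' - 1` in the closure of the finite-block operators. Compressing by a
block projection `Pₙ` kills every finite-block operator once `n` lies outside its support, so
`dₙ := Pₙ ((T - δ) S' - 1) Pₙ` has norm `< 1/2` for all but finitely many `n`. Since `T - δ`
commutes with `Pₙ`, we get `(T - δ) (Pₙ S' Pₙ) = Pₙ (1 + dₙ)`, and the Neumann inverse of
`1 + dₙ` (of norm `≤ 2`, commuting with `Pₙ`) yields `Sₙ := Pₙ S' Pₙ (1 + dₙ)⁻¹`.
-/

section NormedRing

variable {R : Type*} [NormedRing R]

theorem norm_mul_mul_le_of_norm_le_one {p : R} (hp : ‖p‖ ≤ 1) (x : R) : ‖p * x * p‖ ≤ ‖x‖ :=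
  calc ‖p * x * p‖ ≤ ‖p‖ * ‖x‖ * ‖p‖ := norm_mul₃_le
    _ ≤ 1 * ‖x‖ * 1 := by gcongr
    _ = ‖x‖ := by ring

theorem norm_le_two_mul_of_mul_one_add_eq {s d c : R} (hd : ‖d‖ ≤ 1 / 2)
    (h : s * (1 + d) = c) : ‖s‖ ≤ 2 * ‖c‖ := by
  have hs : s = c - s * d := by rw [← h]; noncomm_ring
  have : ‖s‖ ≤ ‖c‖ + ‖s‖ * (1 / 2) :=
    calc ‖s‖ = ‖c - s * d‖ := congrArg norm hs
      _ ≤ ‖c‖ + ‖s‖ * ‖d‖ := (norm_sub_le _ _).trans (by gcongr; exact norm_mul_le _ _)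
      _ ≤ ‖c‖ + ‖s‖ * (1 / 2) := by gcongr
  linarith

theorem exists_corner_right_inverse [CompleteSpace R] {p a b : R} (hp : IsIdempotentElem p)
    (hp_norm : ‖p‖ ≤ 1) (hpa : Commute p a) (hab : ‖p * (a * b - 1) * p‖ ≤ 1 / 2) :
    ∃ s : R, ‖s‖ ≤ 2 * ‖b‖ ∧ s = p * s * p ∧ a * s = p := by
  set d := p * (a * b - 1) * p
  have hpd : p * d = d := by simp only [d, ← mul_assoc, hp.eq]
  have hdp : d * p = d := by simp only [d, mul_assoc, hp.eq]
  have hpabp : a * (p * b * p) = p * (1 + d) := by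
    rw [mul_add, mul_one, hpd]
    simp only [d, mul_sub, sub_mul, mul_one, hp.eq, ← mul_assoc, hpa.eq]
    abel
  let u : Rˣ := Units.oneSub (-d) (by rw [norm_neg]; linarith)
  have hu : (u : R) = 1 + d := by simp [u, sub_eq_add_neg]
  have hpu : Commute p (u⁻¹ : Rˣ) := by
    refine Commute.units_inv_right ?_
    rw [hu]
    exact (Commute.one_right p).add_right (hpd.trans hdp.symm)
  refine ⟨p * b * p * ↑u⁻¹, ?_, ?_, ?_⟩
  · refine (norm_le_two_mul_of_mul_one_add_eq (c := p * b * p) hab ?_).trans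
      (by gcongr; exact norm_mul_mul_le_of_norm_le_one hp_norm b)
    rw [← hu, mul_assoc, Units.inv_mul, mul_one]
  · have hp_left : p * (p * b * p) = p * b * p := by simp only [← mul_assoc, hp.eq]
    have hp_right : p * b * p * p = p * b * p := by rw [mul_assoc, hp.eq]
    calc p * b * p * ↑u⁻¹ = p * b * p * p * ↑u⁻¹ := by rw [hp_right]
      _ = p * b * p * (↑u⁻¹ * p) := by rw [mul_assoc (p * b * p), hpu.eq]
      _ = p * (p * b * p * ↑u⁻¹) * p := by rw [← mul_assoc p, hp_left, ← mul_assoc]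
  · rw [← mul_assoc, hpabp, ← hu, mul_assoc, Units.mul_inv, mul_one]

end NormedRing

section Blocks

variable {R ι : Type*} {P : ι → R}

theorem mul_sum_eq_zero_of_notMem [NonUnitalNonAssocSemiring R]
    (horth : ∀ m n, m ≠ n → P m * P n = 0) {F : Finset ι} {n : ι} (hn : n ∉ F) :
    P n * ∑ m ∈ F, P m = 0 :=
  Finset.mul_sum F P (P n) ▸ Finset.sum_eq_zero fun m hm => horth n m (by rintro rfl; exact hn hm)

theorem exists_finset_norm_mul_mul_lt_of_mem_closure [NormedRing R]
    (horth : ∀ m n, m ≠ n → P m * P n = 0) (hP : ∀ n, ‖P n‖ ≤ 1) {x : R}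
    (hx : x ∈ closure {A : R | ∃ F : Finset ι, A = (∑ n ∈ F, P n) * A * (∑ n ∈ F, P n)})
    {ε : ℝ} (hε : 0 < ε) : ∃ F : Finset ι, ∀ n ∉ F, ‖P n * x * P n‖ < ε := by
  obtain ⟨A, ⟨F, hA⟩, hxA⟩ := Metric.mem_closure_iff.mp hx ε hε
  refine ⟨F, fun n hn => ?_⟩
  have hPA : P n * A * P n = 0 := by
    rw [hA, ← mul_assoc, ← mul_assoc, mul_sum_eq_zero_of_notMem horth hn, zero_mul, zero_mul,
      zero_mul]
  calc ‖P n * x * P n‖ = ‖P n * (x - A) * P n‖ := by rw [mul_sub, sub_mul, hPA, sub_zero]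
    _ ≤ ‖x - A‖ := norm_mul_mul_le_of_norm_le_one (hP n) _
    _ < ε := by rwa [← dist_eq_norm]

end Blocks

theorem stmt10_general {H : Type*} [NormedAddCommGroup H] [InnerProductSpace ℂ H]
    [CompleteSpace H]
    (P : ℕ → H →L[ℂ] H)
    (hproj : ∀ n, IsIdempotentElem (P n) ∧ IsSelfAdjoint (P n))
    (horth : ∀ m n, m ≠ n → P m * P n = 0)
    (T : H →L[ℂ] H)
    (hTblock : ∀ n, T * P n = P n * T)
    (δ : ℝ)
    (hinv : ∃ S' : H →L[ℂ] H,
      ((T - (δ : ℂ) • 1) * S' - 1) ∈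
          closure {A : H →L[ℂ] H | ∃ F : Finset ℕ,
            A = (∑ n ∈ F, P n) * A * (∑ n ∈ F, P n)} ∧
        (S' * (T - (δ : ℂ) • 1) - 1) ∈
          closure {A : H →L[ℂ] H | ∃ F : Finset ℕ,
            A = (∑ n ∈ F, P n) * A * (∑ n ∈ F, P n)}) :
    ∃ (Sf : ℕ → H →L[ℂ] H) (C : ℝ),
      (∀ n, ‖Sf n‖ ≤ C) ∧
        (∀ n, Sf n = P n * Sf n * P n) ∧
        ∃ F : Finset ℕ, ∀ n ∉ F, (T - (δ : ℂ) • 1) * Sf n = P n := by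
  obtain ⟨S', hS', -⟩ := hinv
  have hP_norm n : ‖P n‖ ≤ 1 := IsStarProjection.norm_le _ ⟨(hproj n).1, (hproj n).2⟩
  obtain ⟨F, hF⟩ := exists_finset_norm_mul_mul_lt_of_mem_closure horth hP_norm hS' one_half_pos
  have hblock n : ∃ s, ‖s‖ ≤ 2 * ‖S'‖ ∧ s = P n * s * P n ∧
      (n ∉ F → (T - (δ : ℂ) • 1) * s = P n) := by
    by_cases hn : n ∈ F
    · exact ⟨0, norm_zero.trans_le (by positivity), by simp, absurd hn⟩
    · have hcomm : Commute (P n) (T - (δ : ℂ) • 1) :=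
        (show Commute (P n) T from (hTblock n).symm).sub_right ((Commute.one_right _).smul_right _)
      obtain ⟨s, hs⟩ := exists_corner_right_inverse (hproj n).1 (hP_norm n) hcomm (hF n hn).le
      exact ⟨s, hs.1, hs.2.1, fun _ => hs.2.2⟩
  choose Sf hSf_norm hSf_block hSf_inv using hblock
  exact ⟨Sf, 2 * ‖S'‖, hSf_norm, hSf_block, F, hSf_inv⟩

/-- block-diagonal picture of `B(⊕ₙ Hₙ)`. The direct sum is
encoded by a family of pairwise-orthogonal self-adjoint projections `P n`
summing strongly to the identity; `T` is a uniformly bounded self-adjoint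
block-diagonal operator (it commutes with each `P n`). If `T - δ` is
invertible modulo the norm closure of the ideal of operators supported on
finitely many blocks, then there is a uniformly bounded family of block
operators `Sf n` with `(T - δ) (Sf n) = 1_{Hₙ} (= P n)` for all but finitely
many `n`. -/
theorem stmt10 {H : Type*} [NormedAddCommGroup H] [InnerProductSpace ℂ H]
    [CompleteSpace H]
    (P : ℕ → H →L[ℂ] H)
    (hproj : ∀ n, IsIdempotentElem (P n) ∧ IsSelfAdjoint (P n))
    (horth : ∀ m n, m ≠ n → P m * P n = 0)
    (hsum : ∀ x : H, HasSum (fun n => P n x) x)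
    (T : H →L[ℂ] H) (hTsa : IsSelfAdjoint T)
    (hTblock : ∀ n, T * P n = P n * T)
    (δ : ℝ)
    (hinv : ∃ S' : H →L[ℂ] H,
      ((T - (δ : ℂ) • 1) * S' - 1) ∈
          closure {A : H →L[ℂ] H | ∃ F : Finset ℕ,
            A = (∑ n ∈ F, P n) * A * (∑ n ∈ F, P n)} ∧
        (S' * (T - (δ : ℂ) • 1) - 1) ∈
          closure {A : H →L[ℂ] H | ∃ F : Finset ℕ,
            A = (∑ n ∈ F, P n) * A * (∑ n ∈ F, P n)}) :
    ∃ (Sf : ℕ → H →L[ℂ] H) (C : ℝ),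
      (∀ n, ‖Sf n‖ ≤ C) ∧
        (∀ n, Sf n = P n * Sf n * P n) ∧
        ∃ F : Finset ℕ, ∀ n ∉ F, (T - (δ : ℂ) • 1) * Sf n = P n :=
  stmt10_general P hproj horth T hTblock δ hinv
end

section
/- Let $A$, $B$, $C$ be commuting bounded self-adjoint operators on a Hilbert space with $B, C \ge 0$, and let $\phi > 0$, $|S| > 0$ be constants. Define $D := |S|\phi - (|S| - B)(\phi - C)$. Suppose $\sigma(B) \subseteq \{0\} \cup [\delta, 2|S| - \delta]$ for some $\delta \in (0, |S|)$, $\sigma(C) \subseteq [0, 2\phi]$, and $\ker B \subseteq \ker C$. Then $D$ vanishes on $\ker B$, and for every $\xi \perp \ker B$, $\langle \xi, D\xi \rangle \ge \delta \phi \|\xi\|^2$; consequently $\sigma(D) \subseteq \{0\} \cup [\delta\phi, \infty)$. -/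
/-!
Write `D = sφ - (s - B)(φ - C)`. Polynomial functional calculus turns the spectral hypotheses into
`‖(φ - C)ξ‖ ≤ φ‖ξ‖` and `‖(s - B)Bη‖ ≤ (s - δ)‖Bη‖`, since `φ² - (φ - x)²` and
`((s - δ)² - (s - x)²)x²` are nonnegative on the respective spectra. By Cauchy–Schwarz,
`Re⟪ξ, Dξ⟫ ≥ sφ‖ξ‖² - (s - δ)φ‖ξ‖² = δφ‖ξ‖²` on the range of `B`, hence on its closure `(ker B)ᗮ`.
As `D` is self-adjoint and kills `ker B ⊆ ker C`, every vector may be replaced by its component in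
`(ker B)ᗮ`; this gives `0 ≤ D` and `δφ D ≤ D²`, and the spectral mapping theorem confines `σ(D)` to
`{x ≥ 0 | δφ x ≤ x²} = {0} ∪ [δφ, ∞)`.
-/

open scoped InnerProductSpace
open Polynomial

section CStar
variable {A : Type*} [CStarAlgebra A] {a : A}

lemma aeval_C_sub_X (a : A) (r : ℝ) : aeval a (C r - X) = (r : ℂ) • 1 - a := by
  simp [Algebra.algebraMap_eq_smul_one, Complex.coe_smul]

lemma IsSelfAdjoint.spectrum_subset_ofReal_image_iff (ha : IsSelfAdjoint a) {s : Set ℝ} :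
    spectrum ℂ a ⊆ Complex.ofReal '' s ↔ spectrum ℝ a ⊆ s := by
  rw [← ha.spectrumRestricts.algebraMap_image]
  exact Set.image_subset_image_iff Complex.ofReal_injective

lemma isSelfAdjoint_ofReal_smul_one (r : ℝ) : IsSelfAdjoint ((r : ℂ) • (1 : A)) :=
  (isSelfAdjoint_iff.mpr (Complex.conj_ofReal r)).smul (.one A)

variable [PartialOrder A] [StarOrderedRing A]

lemma IsSelfAdjoint.aeval_le_aeval_iff (ha : IsSelfAdjoint a) (p q : ℝ[X]) :
    aeval a p ≤ aeval a q ↔ ∀ x ∈ spectrum ℝ a, p.eval x ≤ q.eval x := by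
  rw [← cfc_polynomial p a, ← cfc_polynomial q a]
  exact cfc_le_iff _ _ a

lemma spectrum_subset_zero_union_Ici_of_smul_le_mul_self (ha : 0 ≤ a) {c : ℝ}
    (h : c • a ≤ a * a) : spectrum ℝ a ⊆ {0} ∪ Set.Ici c := by
  have hsa : IsSelfAdjoint a := IsSelfAdjoint.of_nonneg ha
  have key := (hsa.aeval_le_aeval_iff (C c * X) (X ^ 2)).mp
    (by simpa [Algebra.smul_def, sq] using h)
  intro x hx
  have hx0 : 0 ≤ x := spectrum_nonneg_of_nonneg ha hx
  have hcx : c * x ≤ x ^ 2 := by simpa using key x hx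
  rcases hx0.eq_or_lt with rfl | hpos
  · exact Or.inl rfl
  · exact Or.inr (le_of_mul_le_mul_right (by nlinarith) hpos)

end CStar

section Hilbert
variable {𝕜 H : Type*} [RCLike 𝕜] [NormedAddCommGroup H] [InnerProductSpace 𝕜 H] [CompleteSpace H]

open RCLike in
lemma ContinuousLinearMap.le_of_re_inner_le {S T : H →L[𝕜] H} (hS : IsSelfAdjoint S)
    (hT : IsSelfAdjoint T) (h : ∀ x, re ⟪x, S x⟫_𝕜 ≤ re ⟪x, T x⟫_𝕜) : S ≤ T := by
  refine (le_def S T).mpr (isPositive_def'.mpr ⟨hT.sub hS, fun x => ?_⟩)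
  rw [reApplyInnerSelf_apply, ← inner_re_symm, sub_apply, inner_sub_right, map_sub, sub_nonneg]
  exact h x

open RCLike in
lemma ContinuousLinearMap.norm_apply_le_of_star_mul_self_le {X Y : H →L[𝕜] H}
    (h : star X * X ≤ star Y * Y) (x : H) : ‖X x‖ ≤ ‖Y x‖ := by
  have hpos := ((le_def _ _).mp h).re_inner_nonneg_right x
  simp only [sub_apply, mul_apply_eq_comp, inner_sub_right, star_eq_adjoint, adjoint_inner_right,
    map_sub, inner_self_eq_norm_sq, sub_nonneg] at hpos
  exact (sq_le_sq₀ (norm_nonneg _) (norm_nonneg _)).mp hpos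

lemma IsSelfAdjoint.mem_of_mem_orthogonal_ker {T : H →L[𝕜] H} (hT : IsSelfAdjoint T) {s : Set H}
    (hs : IsClosed s) (hrange : ∀ y, T y ∈ s) {x : H}
    (hx : x ∈ (LinearMap.ker (T : H →ₗ[𝕜] H))ᗮ) : x ∈ s := by
  rw [ContinuousLinearMap.orthogonal_ker, ← ContinuousLinearMap.star_eq_adjoint, hT.star_eq] at hx
  exact closure_minimal (Set.range_subset_iff.mpr hrange) hs hx

open RCLike in
lemma IsSelfAdjoint.nonneg_and_smul_le_mul_self {T : H →L[𝕜] H} (hT : IsSelfAdjoint T)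
    (K : Submodule 𝕜 H) [K.HasOrthogonalProjection] (hK : ∀ x ∈ K, T x = 0) {c : ℝ} (hc : 0 ≤ c)
    (hKperp : ∀ x ∈ Kᗮ, c * ‖x‖ ^ 2 ≤ re ⟪x, T x⟫_𝕜) :
    0 ≤ T ∧ (c : 𝕜) • T ≤ T * T := by
  have hsymm : ∀ x y, ⟪T x, y⟫_𝕜 = ⟪x, T y⟫_𝕜 := hT.isSymmetric
  have reduce : ∀ x, ∃ y ∈ Kᗮ, T x = T y ∧ ⟪x, T x⟫_𝕜 = ⟪y, T y⟫_𝕜 := by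
    intro x
    obtain ⟨x₀, hx₀, y, hy, rfl⟩ := K.exists_add_mem_mem_orthogonal x
    have hTy : T (x₀ + y) = T y := by rw [map_add, hK x₀ hx₀, zero_add]
    refine ⟨y, hy, hTy, ?_⟩
    rw [hTy, inner_add_left, ← hsymm, hK x₀ hx₀, inner_zero_left, zero_add]
  have hre_nonneg : ∀ y ∈ Kᗮ, 0 ≤ re ⟪y, T y⟫_𝕜 := fun y hy =>
    (mul_nonneg hc (sq_nonneg _)).trans (hKperp y hy)
  constructor
  · refine ContinuousLinearMap.le_of_re_inner_le (.zero _) hT fun x => ?_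
    obtain ⟨y, hy, -, hxy⟩ := reduce x
    simpa [hxy] using hre_nonneg y hy
  · have hcT : IsSelfAdjoint ((c : 𝕜) • T) :=
      (isSelfAdjoint_iff.mpr (RCLike.conj_ofReal (K := 𝕜) c)).smul hT
    have hTT : IsSelfAdjoint (T * T) := by simpa [hT.star_eq] using IsSelfAdjoint.star_mul_self T
    refine ContinuousLinearMap.le_of_re_inner_le hcT hTT fun x => ?_
    obtain ⟨y, hy, hTxy, hxy⟩ := reduce x
    have hcs : re ⟪y, T y⟫_𝕜 ≤ ‖y‖ * ‖T y‖ := (re_le_norm _).trans (norm_inner_le_norm _ _)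
    have hgap : c * ‖y‖ ≤ ‖T y‖ := by
      rcases (norm_nonneg y).eq_or_lt with hy0 | hy0
      · simp [← hy0]
      · exact le_of_mul_le_mul_left (by nlinarith [hKperp y hy]) hy0
    rw [smul_apply, inner_smul_right, mul_apply_eq_comp, ← hsymm x (T x),
      hxy, hTxy, inner_self_eq_norm_sq, re_ofReal_mul]
    calc c * re ⟪y, T y⟫_𝕜 ≤ c * (‖y‖ * ‖T y‖) := mul_le_mul_of_nonneg_left hcs hc
      _ = c * ‖y‖ * ‖T y‖ := (mul_assoc _ _ _).symm
      _ ≤ ‖T y‖ ^ 2 := by rw [sq]; exact mul_le_mul_of_nonneg_right hgap (norm_nonneg _)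

end Hilbert

section SelfAdjointOperator
variable {H : Type*} [NormedAddCommGroup H] [InnerProductSpace ℂ H] [CompleteSpace H]

lemma IsSelfAdjoint.norm_aeval_apply_le {a : H →L[ℂ] H} (ha : IsSelfAdjoint a) {p q : ℝ[X]}
    (h : ∀ x ∈ spectrum ℝ a, p.eval x ^ 2 ≤ q.eval x ^ 2) (v : H) :
    ‖aeval a p v‖ ≤ ‖aeval a q v‖ := by
  have hsa (r : ℝ[X]) : IsSelfAdjoint (aeval a r) := cfc_polynomial r a ▸ cfc_predicate _ a
  refine ContinuousLinearMap.norm_apply_le_of_star_mul_self_le ?_ v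
  rw [(hsa p).star_eq, (hsa q).star_eq, ← map_mul, ← map_mul, ha.aeval_le_aeval_iff]
  simpa [sq] using h

lemma norm_smul_one_sub_apply_le {a : H →L[ℂ] H} (ha : IsSelfAdjoint a) {r : ℝ} (hr : 0 ≤ r)
    (hspec : spectrum ℝ a ⊆ Set.Icc 0 (2 * r)) (v : H) : ‖((r : ℂ) • 1 - a) v‖ ≤ r * ‖v‖ := by
  have := ha.norm_aeval_apply_le (p := C r - X) (q := C r) (fun x hx => by
    obtain ⟨h0, h1⟩ := hspec hx
    simp only [eval_sub, eval_C, eval_X]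
    nlinarith) v
  simpa [aeval_C_sub_X, Algebra.algebraMap_eq_smul_one, norm_smul, abs_of_nonneg hr] using this

lemma norm_smul_one_sub_apply_apply_le {a : H →L[ℂ] H} (ha : IsSelfAdjoint a) {r δ : ℝ}
    (hδ : δ ≤ r) (hspec : spectrum ℝ a ⊆ {0} ∪ Set.Icc δ (2 * r - δ)) (v : H) :
    ‖((r : ℂ) • 1 - a) (a v)‖ ≤ (r - δ) * ‖a v‖ := by
  have := ha.norm_aeval_apply_le (p := (C r - X) * X) (q := C (r - δ) * X) (fun x hx => by
    simp only [eval_mul, eval_sub, eval_C, eval_X]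
    rcases hspec hx with rfl | ⟨h0, h1⟩
    · simp
    · nlinarith [mul_nonneg (mul_nonneg (sub_nonneg.mpr h0) (sub_nonneg.mpr h1)) (sq_nonneg x)]) v
  simpa [aeval_C_sub_X, Algebra.algebraMap_eq_smul_one, mul_apply_eq_comp, ← sub_smul, norm_smul,
    abs_of_nonneg (sub_nonneg.mpr hδ)] using this

end SelfAdjointOperator

section EdgeLaplacian
variable {H : Type*} [NormedAddCommGroup H] [InnerProductSpace ℂ H]

/-- `Δ_{E_r}` of the paper, with `b = Δ_G` and `c = L_r`. -/
noncomputable def edgeLaplacian (s φ : ℝ) (b c : H →L[ℂ] H) : H →L[ℂ] H :=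
  ((s * φ : ℝ) : ℂ) • 1 - ((s : ℂ) • 1 - b) * ((φ : ℂ) • 1 - c)

variable {s φ δ : ℝ} {b c : H →L[ℂ] H}

lemma edgeLaplacian_apply_eq_zero {v : H} (hb : b v = 0) (hc : c v = 0) :
    edgeLaplacian s φ b c v = 0 := by
  simp only [edgeLaplacian, sub_apply, smul_apply, one_apply_eq_self, mul_apply_eq_comp, hc,
    sub_zero, map_smul, hb, smul_smul, Complex.ofReal_mul]
  rw [mul_comm, sub_self]

variable [CompleteSpace H]

lemma isSelfAdjoint_edgeLaplacian (hb : IsSelfAdjoint b) (hc : IsSelfAdjoint c)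
    (hbc : Commute b c) : IsSelfAdjoint (edgeLaplacian s φ b c) := by
  have hsb := (isSelfAdjoint_ofReal_smul_one (A := H →L[ℂ] H) s).sub hb
  have hφc := (isSelfAdjoint_ofReal_smul_one (A := H →L[ℂ] H) φ).sub hc
  refine (isSelfAdjoint_ofReal_smul_one _).sub ((hsb.commute_iff hφc).mp ?_)
  exact ((Commute.one_left _).smul_left _).sub_left
    (((Commute.one_right _).smul_right _).sub_right hbc)

lemma re_inner_edgeLaplacian_self (hb : IsSelfAdjoint b) (v : H) :
    (⟪v, edgeLaplacian s φ b c v⟫_ℂ).re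
      = s * φ * ‖v‖ ^ 2 - (⟪((s : ℂ) • 1 - b) v, ((φ : ℂ) • 1 - c) v⟫_ℂ).re := by
  have hsb : ∀ x y : H, ⟪((s : ℂ) • 1 - b) x, y⟫_ℂ = ⟪x, ((s : ℂ) • 1 - b) y⟫_ℂ :=
    ((isSelfAdjoint_ofReal_smul_one s).sub hb).isSymmetric
  rw [edgeLaplacian, sub_apply, mul_apply_eq_comp, inner_sub_right, ← hsb, Complex.sub_re,
    smul_apply, one_apply_eq_self, inner_smul_right, inner_self_eq_norm_sq_to_K,
    Complex.re_ofReal_mul]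
  norm_cast

lemma le_re_inner_edgeLaplacian_self (hb : IsSelfAdjoint b) {v : H}
    (hbv : ‖((s : ℂ) • 1 - b) v‖ ≤ (s - δ) * ‖v‖) (hcv : ‖((φ : ℂ) • 1 - c) v‖ ≤ φ * ‖v‖) :
    δ * φ * ‖v‖ ^ 2 ≤ (⟪v, edgeLaplacian s φ b c v⟫_ℂ).re := by
  have hcs := (Complex.re_le_norm _).trans (norm_inner_le_norm (𝕜 := ℂ)
    (((s : ℂ) • 1 - b) v) (((φ : ℂ) • 1 - c) v))
  have := mul_le_mul hbv hcv (norm_nonneg _) ((norm_nonneg _).trans hbv)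
  rw [re_inner_edgeLaplacian_self hb]
  nlinarith

lemma le_re_inner_edgeLaplacian_of_mem_orthogonal_ker (hb : IsSelfAdjoint b)
    (hc : IsSelfAdjoint c) (hφ : 0 ≤ φ) (hδ : δ ≤ s)
    (hspecb : spectrum ℝ b ⊆ {0} ∪ Set.Icc δ (2 * s - δ))
    (hspecc : spectrum ℝ c ⊆ Set.Icc 0 (2 * φ)) {v : H}
    (hv : v ∈ (LinearMap.ker (b : H →ₗ[ℂ] H))ᗮ) :
    δ * φ * ‖v‖ ^ 2 ≤ (⟪v, edgeLaplacian s φ b c v⟫_ℂ).re :=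
  hb.mem_of_mem_orthogonal_ker (s := {v | δ * φ * ‖v‖ ^ 2 ≤ (⟪v, edgeLaplacian s φ b c v⟫_ℂ).re})
    (isClosed_le (by fun_prop) (by fun_prop))
    (fun y => le_re_inner_edgeLaplacian_self hb (norm_smul_one_sub_apply_apply_le hb hδ hspecb y)
      (norm_smul_one_sub_apply_le hc hφ hspecc _)) hv

end EdgeLaplacian

theorem stmt16_general {H : Type*} [NormedAddCommGroup H] [InnerProductSpace ℂ H]
    [CompleteSpace H]
    (B C : H →L[ℂ] H)
    (hBsa : IsSelfAdjoint B) (hCsa : IsSelfAdjoint C)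
    (hcomm : B * C = C * B)
    (Scard φ δ : ℝ) (hφ : 0 < φ)
    (hδ : δ ∈ Set.Ioo 0 Scard)
    (hspecB : spectrum ℂ B ⊆
      Complex.ofReal '' ({0} ∪ Set.Icc δ (2 * Scard - δ)))
    (hspecC : spectrum ℂ C ⊆ Complex.ofReal '' Set.Icc 0 (2 * φ))
    (hker : LinearMap.ker (B : H →ₗ[ℂ] H) ≤ LinearMap.ker (C : H →ₗ[ℂ] H)) :
    (∀ ξ ∈ LinearMap.ker (B : H →ₗ[ℂ] H),
        (((Scard * φ : ℝ) : ℂ) • (1 : H →L[ℂ] H)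
          - ((Scard : ℂ) • 1 - B) * ((φ : ℂ) • 1 - C)) ξ = 0) ∧
      (∀ ξ : H, (∀ v ∈ LinearMap.ker (B : H →ₗ[ℂ] H), ⟪ξ, v⟫_ℂ = 0) →
        δ * φ * ‖ξ‖ ^ 2 ≤
          (⟪ξ, (((Scard * φ : ℝ) : ℂ) • (1 : H →L[ℂ] H)
            - ((Scard : ℂ) • 1 - B) * ((φ : ℂ) • 1 - C)) ξ⟫_ℂ).re) ∧
      spectrum ℂ (((Scard * φ : ℝ) : ℂ) • (1 : H →L[ℂ] H)
          - ((Scard : ℂ) • 1 - B) * ((φ : ℂ) • 1 - C)) ⊆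
        Complex.ofReal '' ({0} ∪ Set.Ici (δ * φ)) := by
  obtain ⟨hδ0, hδS⟩ := hδ
  rw [hBsa.spectrum_subset_ofReal_image_iff] at hspecB
  rw [hCsa.spectrum_subset_ofReal_image_iff] at hspecC
  have hD := isSelfAdjoint_edgeLaplacian (s := Scard) (φ := φ) hBsa hCsa hcomm
  have hkerD : ∀ ξ ∈ LinearMap.ker (B : H →ₗ[ℂ] H), edgeLaplacian Scard φ B C ξ = 0 :=
    fun ξ hξ => edgeLaplacian_apply_eq_zero hξ (hker hξ)
  have hperpD : ∀ ξ ∈ (LinearMap.ker (B : H →ₗ[ℂ] H))ᗮ,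
      δ * φ * ‖ξ‖ ^ 2 ≤ (⟪ξ, edgeLaplacian Scard φ B C ξ⟫_ℂ).re := fun ξ hξ =>
    le_re_inner_edgeLaplacian_of_mem_orthogonal_ker hBsa hCsa hφ.le hδS.le hspecB hspecC hξ
  have : CompleteSpace (LinearMap.ker (B : H →ₗ[ℂ] H)) :=
    (ContinuousLinearMap.isClosed_ker B).completeSpace_coe
  obtain ⟨hnonneg, hgap⟩ := hD.nonneg_and_smul_le_mul_self _ hkerD (by positivity) hperpD
  refine ⟨hkerD, fun ξ hξ => hperpD ξ ((Submodule.mem_orthogonal' _ _).mpr hξ), ?_⟩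
  refine hD.spectrum_subset_ofReal_image_iff.mpr ?_
  exact spectrum_subset_zero_union_Ici_of_smul_le_mul_self hnonneg
    (by rwa [RCLike.real_smul_eq_coe_smul (K := ℂ)])

/-- joint spectral estimate. Let `B, C` be commuting bounded
self-adjoint nonnegative operators on a Hilbert space, `φ, |S| > 0` constants,
and `D := |S|φ - (|S| - B)(φ - C)`. If `σ(B) ⊆ {0} ∪ [δ, 2|S| - δ]` with
`δ ∈ (0, |S|)`, `σ(C) ⊆ [0, 2φ]` and `ker B ⊆ ker C`, then `D` vanishes on
`ker B`, `⟨ξ, Dξ⟩ ≥ δφ‖ξ‖²` for `ξ ⊥ ker B`, and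
`σ(D) ⊆ {0} ∪ [δφ, ∞)`. -/
theorem stmt16 {H : Type*} [NormedAddCommGroup H] [InnerProductSpace ℂ H]
    [CompleteSpace H]
    (B C : H →L[ℂ] H)
    (hBsa : IsSelfAdjoint B) (hCsa : IsSelfAdjoint C)
    (hcomm : B * C = C * B)
    (hBpos : B.IsPositive) (hCpos : C.IsPositive)
    (Scard φ δ : ℝ) (hS : 0 < Scard) (hφ : 0 < φ)
    (hδ : δ ∈ Set.Ioo 0 Scard)
    (hspecB : spectrum ℂ B ⊆
      Complex.ofReal '' ({0} ∪ Set.Icc δ (2 * Scard - δ)))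
    (hspecC : spectrum ℂ C ⊆ Complex.ofReal '' Set.Icc 0 (2 * φ))
    (hker : LinearMap.ker (B : H →ₗ[ℂ] H) ≤ LinearMap.ker (C : H →ₗ[ℂ] H)) :
    (∀ ξ ∈ LinearMap.ker (B : H →ₗ[ℂ] H),
        (((Scard * φ : ℝ) : ℂ) • (1 : H →L[ℂ] H)
          - ((Scard : ℂ) • 1 - B) * ((φ : ℂ) • 1 - C)) ξ = 0) ∧
      (∀ ξ : H, (∀ v ∈ LinearMap.ker (B : H →ₗ[ℂ] H), ⟪ξ, v⟫_ℂ = 0) →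
        δ * φ * ‖ξ‖ ^ 2 ≤
          (⟪ξ, (((Scard * φ : ℝ) : ℂ) • (1 : H →L[ℂ] H)
            - ((Scard : ℂ) • 1 - B) * ((φ : ℂ) • 1 - C)) ξ⟫_ℂ).re) ∧
      spectrum ℂ (((Scard * φ : ℝ) : ℂ) • (1 : H →L[ℂ] H)
          - ((Scard : ℂ) • 1 - B) * ((φ : ℂ) • 1 - C)) ⊆
        Complex.ofReal '' ({0} ∪ Set.Ici (δ * φ)) :=
  stmt16_general B C hBsa hCsa hcomm Scard φ δ hφ hδ hspecB hspecC hker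
end
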